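/- arXiv:1809.03493 — 2 statements merged into one kernel-verified Lean document; each statement's English description precedes it below -/
import Mathlib

section
/- Let L be a ladder-like graph on 2m vertices with m ≥ 6. Then the graph G = L − {u_1 v_1, u_4 v_4} is 3-connected. -/
open SimpleGraph

/-- `IsKRegular G k`: every vertex has exactly `k` neighbours. -/
def IsKRegular {V : Type*} (G : SimpleGraph V) (k : ℕ) : Prop :=
  ∀ v : V, (G.neighborSet v).ncard = k

/-- `IsKConnected G k`: `G` has more than `k` vertices and removing any set of
fewer than `k` vertices leaves a connected graph. -/
def IsKConnected {V : Type*} (G : SimpleGraph V) (k : ℕ) : Prop :=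
  k < Nat.card V ∧ ∀ S : Set V, S.ncard < k → (G.induce (Sᶜ : Set V)).Connected

/-- `G` contains a cycle of length `ℓ`. -/
def HasCycleOfLength {V : Type*} (G : SimpleGraph V) (ℓ : ℕ) : Prop :=
  ∃ (v : V) (c : G.Walk v v), c.IsCycle ∧ c.length = ℓ

/-- The ladder-like graph on `2m` vertices: two disjoint `m`-cycles
`u_1,...,u_m` (side `false`) and `v_1,...,v_m` (side `true`), the matching
edges `u_i v_i`, and the two extra edges `u_1 v_4` and `u_4 v_1`.
Vertex `(false, i)` is `u_{i+1}` and `(true, i)` is `v_{i+1}`. -/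
def ladderLike (m : ℕ) [NeZero m] : SimpleGraph (Bool × Fin m) where
  Adj p q :=
    (p.1 = q.1 ∧ p.2 ≠ q.2 ∧ (q.2 = p.2 + 1 ∨ p.2 = q.2 + 1)) ∨
    (p.1 ≠ q.1 ∧ (p.2 = q.2 ∨ (p.2 = 0 ∧ q.2 = 3) ∨ (p.2 = 3 ∧ q.2 = 0)))
  symm := by
    refine ⟨?_⟩
    rintro ⟨a, i⟩ ⟨b, j⟩ (⟨h1, h2, h3⟩ | ⟨h1, h2⟩)
    · exact Or.inl ⟨h1.symm, h2.symm, h3.symm⟩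
    · refine Or.inr ⟨Ne.symm h1, ?_⟩
      rcases h2 with h | ⟨h, h'⟩ | ⟨h, h'⟩
      · exact Or.inl h.symm
      · exact Or.inr (Or.inr ⟨h', h⟩)
      · exact Or.inr (Or.inl ⟨h', h⟩)
  loopless := by
    refine ⟨?_⟩
    rintro ⟨a, i⟩ (⟨-, h, -⟩ | ⟨h, -⟩) <;> exact h rfl

/-- The ladder-like graph with the edges `u_1 v_1` and `u_4 v_4` deleted. -/
def ladderLikeMinus (m : ℕ) [NeZero m] : SimpleGraph (Bool × Fin m) :=
  (ladderLike m).deleteEdges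
    {s((false, (0 : Fin m)), (true, (0 : Fin m))), s((false, (3 : Fin m)), (true, (3 : Fin m)))}

/-! If the two deleted vertices lie on the same one of the two `m`-cycles, the other cycle
survives intact, and every vertex has a neighbour on the opposite cycle (through its rung, or
through `u_1 v_4`, `u_4 v_1` at the two vertices whose rung is missing). Otherwise each cycle loses
at most one vertex and stays connected, and at most four indices are excluded (`1`, `4` and the
two deleted positions), so some rung `u_i v_i` survives and joins the two cycles. -/

namespace SimpleGraph

variable {V : Type*} {G : SimpleGraph V} {S : Set V}

theorem reachable_induce_compl_of_chain {g : ℕ → V} {n : ℕ}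
    (hadj : ∀ t < n, G.Adj (g t) (g (t + 1))) (hS : ∀ t ≤ n, g t ∉ S) :
    (G.induce Sᶜ).Reachable ⟨g 0, hS 0 n.zero_le⟩ ⟨g n, hS n le_rfl⟩ := by
  induction n with
  | zero => rfl
  | succ n ih =>
    exact (ih (fun t ht ↦ hadj t (by omega)) (fun t ht ↦ hS t (by omega))).trans
      (induce_adj.2 (hadj n n.lt_succ_self)).reachable

open scoped Fin.NatCast in
/-- Of the two arcs of the cycle joining `f i` and `f j`, at least one avoids the deleted
vertex. -/
theorem reachable_induce_compl_of_cycle {m : ℕ} [NeZero m] {f : Fin m → V}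
    (hadj : ∀ k, G.Adj (f k) (f (k + 1))) (hS : (f ⁻¹' S).Subsingleton) {i j : Fin m}
    (hi : f i ∉ S) (hj : f j ∉ S) : (G.induce Sᶜ).Reachable ⟨f i, hi⟩ ⟨f j, hj⟩ := by
  have arc : ∀ (a : Fin m) (n : ℕ) (h : ∀ t ≤ n, f (a + t) ∉ S),
      (G.induce Sᶜ).Reachable ⟨f a, by simpa using h 0⟩ ⟨f (a + n), h n le_rfl⟩ := by
    intro a n h
    convert reachable_induce_compl_of_chain (g := fun t ↦ f (a + t))
      (fun t _ ↦ by simpa [add_assoc] using hadj (a + t)) h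
    simp
  obtain ⟨n, hn, rfl⟩ : ∃ n < m, j = i + n := ⟨(j - i).val, (j - i).isLt, by simp⟩
  by_cases hfwd : ∀ t ≤ n, f (i + t) ∉ S
  · exact arc i n hfwd
  push Not at hfwd
  obtain ⟨t, htn, htS⟩ := hfwd
  have ht0 : t ≠ 0 := by rintro rfl; exact hi (by simpa using htS)
  have htn' : t ≠ n := by rintro rfl; exact hj htS
  have hback : ∀ s ≤ m - n, f (i + n + s) ∉ S := by
    intro s hs hsS
    have heq : ((n + s : ℕ) : Fin m) = (t : ℕ) := by
      have := (hS hsS htS : i + n + s = i + t)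
      rwa [add_assoc, add_right_inj, ← Nat.cast_add] at this
    have hmod := congrArg Fin.val heq
    rw [Fin.val_natCast, Fin.val_natCast, Nat.mod_eq_of_lt (by omega : t < m)] at hmod
    rcases (by omega : n + s < m ∨ n + s = m) with hlt | hm
    · rw [Nat.mod_eq_of_lt hlt] at hmod; omega
    · rw [hm, Nat.mod_self] at hmod; omega
  convert (arc (i + n) (m - n) hback).symm
  rw [add_assoc, ← Nat.cast_add, Nat.add_sub_cancel' hn.le]
  simp

end SimpleGraph

namespace Set

variable {α β : Type*} {S : Set (α × β)}

theorem preimage_mk_eq_empty_of_nontrivial (hfin : S.Finite) (hS : S.ncard ≤ 2)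
    {a a' : α} (ha : a ≠ a') (h : (Prod.mk a ⁻¹' S).Nontrivial) : Prod.mk a' ⁻¹' S = ∅ := by
  obtain ⟨x, hx, y, hy, hxy⟩ := h
  refine eq_empty_of_forall_notMem fun z hz ↦ ?_
  have : 2 < S.ncard := (two_lt_ncard hfin).2
    ⟨_, hx, _, hy, _, hz, by simpa using hxy, by simp [ha], by simp [ha]⟩
  omega

theorem exists_forall_notMem_mk [Finite β] (hfin : S.Finite) {T : Set β}
    (h : T.ncard + S.ncard < Nat.card β) : ∃ w ∉ T, ∀ a, (a, w) ∉ S := by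
  have hbad : (T ∪ Prod.snd '' S).ncard < (univ : Set β).ncard := calc
    (T ∪ Prod.snd '' S).ncard ≤ T.ncard + (Prod.snd '' S).ncard := ncard_union_le _ _
    _ ≤ T.ncard + S.ncard := by gcongr; exact ncard_image_le hfin
    _ < (univ : Set β).ncard := by rwa [ncard_univ]
  obtain ⟨w, -, hw⟩ := exists_mem_notMem_of_ncard_lt_ncard hbad
  simp only [mem_union, mem_image, not_or, not_exists, not_and] at hw
  exact ⟨w, hw.1, fun a haw ↦ hw.2 _ haw rfl⟩

end Set

namespace ladderLikeMinus

variable {m : ℕ} [NeZero m] {S : Set (Bool × Fin m)}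

theorem adj_succ (hm : 1 < m) (b : Bool) (k : Fin m) :
    (ladderLikeMinus m).Adj (b, k) (b, k + 1) := by
  simp only [ladderLikeMinus, ladderLike, deleteEdges_adj]
  refine ⟨by simp; omega, ?_⟩
  cases b <;> simp

theorem adj_rung {i : Fin m} (h0 : i ≠ 0) (h3 : i ≠ 3) (b : Bool) :
    (ladderLikeMinus m).Adj (b, i) (!b, i) := by
  cases b <;> simp [ladderLikeMinus, ladderLike, h0, h3]

theorem exists_adj_not (hm : 3 < m) (b : Bool) (i : Fin m) :
    ∃ k, (ladderLikeMinus m).Adj (b, i) (!b, k) := by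
  have h03 : (0 : Fin m) ≠ 3 := by simp [Fin.ext_iff, Nat.mod_eq_of_lt hm]
  by_cases h0 : i = 0
  · subst h0; exact ⟨3, by cases b <;> simp [ladderLikeMinus, ladderLike, h03, h03.symm]⟩
  by_cases h3 : i = 3
  · subst h3; exact ⟨0, by cases b <;> simp [ladderLikeMinus, ladderLike, h03, h03.symm]⟩
  exact ⟨i, adj_rung h0 h3 b⟩

theorem reachable_same_side (hm : 1 < m) {b : Bool} (hS : (Prod.mk b ⁻¹' S).Subsingleton)
    {i j : Fin m} (hi : (b, i) ∉ S) (hj : (b, j) ∉ S) :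
    ((ladderLikeMinus m).induce Sᶜ).Reachable ⟨(b, i), hi⟩ ⟨(b, j), hj⟩ :=
  reachable_induce_compl_of_cycle (adj_succ hm b) hS hi hj

theorem preconnected_of_side_disjoint (hm : 3 < m) {b : Bool} (hb : ∀ k, (b, k) ∉ S) :
    ((ladderLikeMinus m).induce Sᶜ).Preconnected := by
  have hside : (Prod.mk b ⁻¹' S).Subsingleton := fun k hk ↦ absurd hk (hb k)
  have hub : ∀ x (hx : x ∉ S),
      ((ladderLikeMinus m).induce Sᶜ).Reachable ⟨x, hx⟩ ⟨(b, 0), hb 0⟩ := by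
    rintro ⟨c, i⟩ hx
    obtain rfl | rfl := Bool.eq_or_eq_not b c
    · exact reachable_same_side (by omega) hside hx (hb 0)
    · obtain ⟨k, hk⟩ := exists_adj_not hm _ i
      exact (induce_adj.2 hk).reachable.trans
        (reachable_same_side (by omega) hside (hb k) (hb 0))
  rintro ⟨x, hx⟩ ⟨y, hy⟩
  exact (hub x hx).trans (hub y hy).symm

theorem preconnected_of_rung (hm : 1 < m) (hS : ∀ b, (Prod.mk b ⁻¹' S).Subsingleton)
    {w : Fin m} (h0 : w ≠ 0) (h3 : w ≠ 3) (hw : ∀ b, (b, w) ∉ S) :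
    ((ladderLikeMinus m).induce Sᶜ).Preconnected := by
  have hub : ∀ x (hx : x ∉ S),
      ((ladderLikeMinus m).induce Sᶜ).Reachable ⟨x, hx⟩ ⟨(true, w), hw true⟩ := by
    rintro ⟨(_ | _), i⟩ hx
    · exact (reachable_same_side hm (hS false) hx (hw false)).trans
        (induce_adj.2 (adj_rung h0 h3 false)).reachable
    · exact reachable_same_side hm (hS true) hx (hw true)
  rintro ⟨x, hx⟩ ⟨y, hy⟩
  exact (hub x hx).trans (hub y hy).symm

end ladderLikeMinus

theorem ladderLikeMinus_threeConnected (m : ℕ) [NeZero m] (hm : 6 ≤ m) :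
    IsKConnected (ladderLikeMinus m) 3 := by
  refine ⟨by simp; omega, fun S hS ↦ (connected_iff _).2 ⟨?_, ?_⟩⟩
  · by_cases hsides : ∀ b, (Prod.mk b ⁻¹' S).Subsingleton
    · have hT : ({0, 3} : Set (Fin m)).ncard ≤ 2 := (Set.ncard_insert_le _ _).trans (by simp)
      obtain ⟨w, hw03, hw⟩ := S.exists_forall_notMem_mk S.toFinite (T := {0, 3})
        (by rw [Nat.card_fin]; omega)
      simp only [Set.mem_insert_iff, Set.mem_singleton_iff, not_or] at hw03
      exact ladderLikeMinus.preconnected_of_rung (by omega) hsides hw03.1 hw03.2 hw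
    · push Not at hsides
      obtain ⟨b, hb⟩ := hsides
      have hfree := S.preimage_mk_eq_empty_of_nontrivial S.toFinite (by omega)
        (Bool.not_ne_self b).symm hb
      exact ladderLikeMinus.preconnected_of_side_disjoint (by omega)
        (Set.eq_empty_iff_forall_notMem.1 hfree)
  · refine (Set.nonempty_compl.2 fun h ↦ ?_).to_subtype
    rw [h, Set.ncard_univ, Nat.card_prod, Nat.card_fin] at hS
    simp at hS
    omega
end

section
/- For every n ≥ 4, there exists a Hamiltonian cycle C in the augmented cube AQ_n such that AQ_n − E(C) is a spanning (2n−3)-regular and (2n−3)-connected subgraph of AQ_n. -/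
open SimpleGraph

/-- The `n`-dimensional augmented cube: vertices are binary strings of length `n`;
two strings are adjacent iff (unwinding the recursive definition) they agree on
a prefix, and then either differ in exactly one coordinate or are bitwise
complementary on the whole remaining suffix. -/
def AQ (n : ℕ) : SimpleGraph (Fin n → Bool) where
  Adj x y := ∃ i : Fin n, (∀ j, j < i → x j = y j) ∧
    ((x i ≠ y i ∧ ∀ j, i < j → x j = y j) ∨ (∀ j, i ≤ j → x j ≠ y j))
  symm := by
    constructor
    rintro x y ⟨i, h1, h2⟩
    refine ⟨i, fun j hj => (h1 j hj).symm, ?_⟩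
    rcases h2 with ⟨ha, hb⟩ | h
    · exact Or.inl ⟨Ne.symm ha, fun j hj => (hb j hj).symm⟩
    · exact Or.inr fun j hj => Ne.symm (h j hj)
  loopless := by
    constructor
    rintro x ⟨i, -, ⟨ha, -⟩ | h⟩
    · exact ha rfl
    · exact h i le_rfl rfl


/-!
Induction on `n ≥ 3`. Cut a Hamiltonian cycle of `AQ n` at an edge `vb` into a Hamiltonian path
`p` from `b` to `v`; then `0v → 1v ⇝ 1b → 0b ⇝ 0v`, running along `p` backwards in the copy `1·`
and forwards in the copy `0·`, is a Hamiltonian cycle of `AQ (n + 1)`. Its complement contains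
both copies of `AQ n − E(p)`, every complementary edge `ax ~ (!a)xᶜ`, and every hypercube edge
`ax ~ (!a)x` with `x ∉ {v, b}`. Remove at most `2n − 2` vertices. If both copies lose fewer than
`2n − 3`, both stay connected by induction, and counting yields a complementary edge between
survivors. Otherwise one copy loses at most one vertex, and a survivor of the other copy reaches
it along its complementary or hypercube edge, or after one step inside its own copy; at `v` and
`b` the edge `vb`, which lies outside `E(p)`, provides the neighbour needed for that step.
The base case `n = 3` is a finite computation, and regularity holds because `AQ n` is
`(2n − 1)`-regular and the cycle uses two edges at each vertex.
-/

section Graph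

variable {V : Type*} {G : SimpleGraph V}

theorem ncard_neighborSet_deleteEdges_of_isCycle [Finite V] {u v : V} {c : G.Walk u u}
    (hc : c.IsCycle) (hv : v ∈ c.support) :
    ((G.deleteEdges {e | e ∈ c.edges}).neighborSet v).ncard = (G.neighborSet v).ncard - 2 := by
  have : (G.deleteEdges {e | e ∈ c.edges}).neighborSet v =
      G.neighborSet v \ c.toSubgraph.neighborSet v := by
    ext w
    rw [Set.mem_sdiff, Subgraph.mem_neighborSet, ← Subgraph.mem_edgeSet,
      Walk.mem_edges_toSubgraph]
    simp
  rw [this, Set.ncard_sdiff (c.toSubgraph.neighborSet_subset v),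
    hc.ncard_neighborSet_toSubgraph_eq_two hv]

theorem ncard_neighborSet_deleteEdges_lt_of_isCycle_cons [Finite V] {v b : V} (h : G.Adj v b)
    {p : G.Walk b v} (hc : (Walk.cons h p).IsCycle) {x : V} (hx : x ∈ ({v, b} : Set V)) :
    ((G.deleteEdges {e | e ∈ (Walk.cons h p).edges}).neighborSet x).ncard <
      ((G.deleteEdges {e | e ∈ p.edges}).neighborSet x).ncard := by
  have hvb : s(v, b) ∉ p.edges := ((Walk.cons_isCycle_iff p h).1 hc).2
  obtain ⟨w, hxw⟩ : ∃ w, s(x, w) = s(v, b) := by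
    rcases hx with rfl | rfl
    exacts [⟨b, rfl⟩, ⟨v, Sym2.eq_swap⟩]
  have hsub : {e | e ∈ p.edges} ⊆ {e | e ∈ (Walk.cons h p).edges} :=
    fun _ he => List.mem_cons_of_mem _ he
  refine Set.ncard_lt_ncard <| (Set.ssubset_iff_of_subset
    (neighborSet_mono (deleteEdges_anti hsub) x)).2 ⟨w, ?_, by simp [hxw]⟩
  simp only [mem_neighborSet, deleteEdges_adj, Set.mem_ofPred_eq, hxw, hvb, not_false_eq_true,
    and_true]
  rwa [← mem_edgeSet, hxw]

theorem IsKConnected.mono {G' : SimpleGraph V} {k : ℕ} (h : G ≤ G') (hG : IsKConnected G k) :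
    IsKConnected G' k :=
  ⟨hG.1, fun S hS => (hG.2 S hS).mono (comap_monotone _ h)⟩

theorem reachable_induce_of_adj {s : Set V} {u w : V} (hu : u ∈ s) (hw : w ∈ s)
    (h : G.Adj u w) : (G.induce s).Reachable ⟨u, hu⟩ ⟨w, hw⟩ :=
  Adj.reachable h

variable [DecidableEq V] [DecidableRel G.Adj]

variable (G) in
def expandWithin (P A : Finset V) : Finset V := A ∪ P.filter fun w => ∃ a ∈ A, G.Adj a w

theorem exists_reachable_of_mem_iterate_expandWithin {P : Finset V} {u : V} (hu : u ∈ P)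
    {w : V} {k : ℕ} (hw : w ∈ (expandWithin G P)^[k] {u}) :
    ∃ hw' : w ∈ P, (G.induce (P : Set V)).Reachable ⟨u, hu⟩ ⟨w, hw'⟩ := by
  induction k generalizing w with
  | zero =>
    obtain rfl := Finset.mem_singleton.1 hw
    exact ⟨hu, .rfl⟩
  | succ k ih =>
    rw [Function.iterate_succ_apply', expandWithin, Finset.mem_union, Finset.mem_filter] at hw
    rcases hw with hw | ⟨hwP, a, ha, hadj⟩
    · exact ih hw
    · obtain ⟨haP, hr⟩ := ih ha
      exact ⟨hwP, hr.trans (reachable_induce_of_adj haP hwP hadj)⟩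

theorem connected_induce_of_subset_iterate_expandWithin {P : Finset V} {u : V} (hu : u ∈ P)
    {k : ℕ} (h : P ⊆ (expandWithin G P)^[k] {u}) : (G.induce (P : Set V)).Connected :=
  (connected_iff_exists_forall_reachable _).2
    ⟨⟨u, hu⟩, fun ⟨_, hw⟩ => (exists_reachable_of_mem_iterate_expandWithin hu (h hw)).2⟩

end Graph

namespace AQ

variable {n : ℕ}

instance : DecidableRel (AQ n).Adj := fun x y => by unfold AQ; infer_instance

def cons (a : Bool) (x : Fin n → Bool) : Fin (n + 1) → Bool := Fin.cons a x

@[simp]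
theorem cons_inj {a b : Bool} {x y : Fin n → Bool} : cons a x = cons b y ↔ a = b ∧ x = y :=
  Fin.cons_inj

theorem cons_right_injective (a : Bool) : Function.Injective (cons (n := n) a) :=
  Fin.cons_right_injective (α := fun _ => Bool) a

theorem exists_eq_cons (z : Fin (n + 1) → Bool) : ∃ a x, z = cons a x :=
  ⟨z 0, Fin.tail z, (Fin.cons_self_tail z).symm⟩

theorem compl_ne_self [NeZero n] (x : Fin n → Bool) : xᶜ ≠ x :=
  fun h => Bool.not_ne_self (x 0) (congrFun h 0)

theorem adj_cons_cons {a b : Bool} {x y : Fin n → Bool} :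
    (AQ (n + 1)).Adj (cons a x) (cons b y) ↔
      (a = b ∧ (AQ n).Adj x y) ∨ (a ≠ b ∧ (y = x ∨ y = xᶜ)) := by
  have hne : ∀ c d : Bool, c ≠ d ↔ d = cᶜ := by decide
  simp only [AQ, cons, Fin.exists_fin_succ, Fin.forall_fin_succ, Fin.cons_zero, Fin.cons_succ,
    Fin.succ_lt_succ_iff, Fin.succ_le_succ_iff, Fin.not_lt_zero, Fin.zero_le, Fin.succ_pos,
    funext_iff, Pi.compl_apply, hne]
  grind

theorem adj_cons_of_ne {a b : Bool} (h : a ≠ b) (x : Fin n → Bool) :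
    (AQ (n + 1)).Adj (cons a x) (cons b x) :=
  adj_cons_cons.2 (Or.inr ⟨h, Or.inl rfl⟩)

def consHom (a : Bool) : AQ n →g AQ (n + 1) where
  toFun := cons a
  map_rel' h := adj_cons_cons.2 (Or.inl ⟨rfl, h⟩)

@[simp]
theorem consHom_apply (a : Bool) (x : Fin n → Bool) : consHom a x = cons a x := rfl

theorem neighborSet_cons (a : Bool) (x : Fin n → Bool) :
    (AQ (n + 1)).neighborSet (cons a x) =
      cons a '' (AQ n).neighborSet x ∪ {cons (!a) x, cons (!a) xᶜ} := by
  ext z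
  obtain ⟨b, y, rfl⟩ := exists_eq_cons z
  cases a <;> cases b <;> simp [adj_cons_cons]

theorem ncard_neighborSet (x : Fin n → Bool) : ((AQ n).neighborSet x).ncard = 2 * n - 1 := by
  induction n with
  | zero => simp [AQ]
  | succ n ih =>
    obtain ⟨a, x, rfl⟩ := exists_eq_cons x
    have hdisj : Disjoint (cons a '' (AQ n).neighborSet x) {cons (!a) x, cons (!a) xᶜ} := by
      simp [Set.disjoint_left]
    rw [neighborSet_cons, Set.ncard_union_eq hdisj,
      Set.ncard_image_of_injective _ (cons_right_injective a), ih]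
    rcases n with _ | n
    · simp [Subsingleton.elim xᶜ x]
    · rw [Set.ncard_pair (by simp [(compl_ne_self x).symm])]
      omega

section Double

variable {u v w b : Fin n → Bool}

theorem mem_edges_map_consHom {β a a' : Bool} {x y : Fin n → Bool} {q : (AQ n).Walk u w}
    (h : s(cons a x, cons a' y) ∈ (q.map (consHom β)).edges) :
    a = β ∧ a' = β ∧ s(x, y) ∈ q.edges := by
  rw [Walk.edges_map, List.mem_map] at h
  obtain ⟨e, he, hmap⟩ := h
  induction e using Sym2.ind with
  | _ x' y' =>
  simp only [consHom_apply, Sym2.map_mk, Sym2.eq_iff, cons_inj] at hmap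
  rcases hmap with ⟨⟨rfl, rfl⟩, rfl, rfl⟩ | ⟨⟨rfl, rfl⟩, rfl, rfl⟩
  · exact ⟨rfl, rfl, he⟩
  · exact ⟨rfl, rfl, Sym2.eq_swap ▸ he⟩

def doublePath (p : (AQ n).Walk b v) : (AQ (n + 1)).Walk (consHom true v) (consHom false v) :=
  (p.reverse.map (consHom true)).append
    (.cons (show (AQ (n + 1)).Adj (consHom true b) (consHom false b) from
      adj_cons_of_ne (by decide) b) (p.map (consHom false)))

def double (p : (AQ n).Walk b v) : (AQ (n + 1)).Walk (consHom false v) (consHom false v) :=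
  .cons (show (AQ (n + 1)).Adj (consHom false v) (consHom true v) from
    adj_cons_of_ne (by decide) v) (doublePath p)

theorem mem_edges_doublePath {p : (AQ n).Walk b v} {a a' : Bool} {x y : Fin n → Bool}
    (h : s(cons a x, cons a' y) ∈ (doublePath p).edges) :
    (a = a' ∧ s(x, y) ∈ p.edges) ∨ (x = b ∧ y = b) := by
  rw [doublePath, Walk.edges_append, Walk.edges_cons, List.mem_append, List.mem_cons] at h
  rcases h with h | h | h
  · obtain ⟨rfl, rfl, hxy⟩ := mem_edges_map_consHom h
    exact Or.inl ⟨rfl, by simpa using hxy⟩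
  · simp only [consHom_apply, Sym2.eq_iff, cons_inj] at h
    rcases h with ⟨⟨-, rfl⟩, -, rfl⟩ | ⟨⟨-, rfl⟩, -, rfl⟩ <;> exact Or.inr ⟨rfl, rfl⟩
  · obtain ⟨rfl, rfl, hxy⟩ := mem_edges_map_consHom h
    exact Or.inl ⟨rfl, hxy⟩

theorem mem_edges_double {p : (AQ n).Walk b v} {a a' : Bool} {x y : Fin n → Bool}
    (h : s(cons a x, cons a' y) ∈ (double p).edges) :
    (a = a' ∧ s(x, y) ∈ p.edges) ∨ (x = y ∧ x ∈ ({v, b} : Set (Fin n → Bool))) := by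
  rw [double, Walk.edges_cons, List.mem_cons] at h
  rcases h with h | h
  · simp only [consHom_apply, Sym2.eq_iff, cons_inj] at h
    rcases h with ⟨⟨-, rfl⟩, -, rfl⟩ | ⟨⟨-, rfl⟩, -, rfl⟩ <;> exact Or.inr ⟨rfl, Or.inl rfl⟩
  · rcases mem_edges_doublePath h with h | ⟨rfl, rfl⟩
    · exact Or.inl h
    · exact Or.inr ⟨rfl, Or.inr rfl⟩

theorem isHamiltonian_doublePath {p : (AQ n).Walk b v} (hp : p.IsHamiltonian) :
    (doublePath p).IsHamiltonian := by
  intro z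
  obtain ⟨a, x, rfl⟩ := exists_eq_cons z
  have hcount (β : Bool) (l : List (Fin n → Bool)) :
      (l.map (consHom β)).count (cons a x) = if a = β then l.count x else 0 := by
    split_ifs with h
    · exact h ▸ List.count_map_of_injective _ _ (cons_right_injective β) x
    · simp [List.count_eq_zero, Ne.symm h]
  rw [doublePath, Walk.support_append, Walk.support_cons, List.tail_cons, Walk.support_map,
    Walk.support_map, Walk.support_reverse, List.count_append]
  cases a <;> simp [hcount, hp x]

theorem isHamiltonianCycle_double {p : (AQ n).Walk b v} (hp : p.IsHamiltonian) (hbv : b ≠ v) :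
    (double p).IsHamiltonianCycle := by
  have hQ := isHamiltonian_doublePath hp
  refine Walk.isHamiltonianCycle_iff_isCycle_and_support_count_tail_eq_one.2
    ⟨Walk.cons_isCycle_iff _ _ |>.2 ⟨hQ.isPath, fun h => ?_⟩, hQ⟩
  rcases mem_edges_doublePath h with h | ⟨rfl, -⟩
  · exact absurd h.1 (by decide)
  · exact hbv rfl

theorem adj_deleteEdges_double {p : (AQ n).Walk b v} {a a' : Bool} {x y : Fin n → Bool}
    (hxy : (AQ (n + 1)).Adj (cons a x) (cons a' y)) (hp : a = a' → s(x, y) ∉ p.edges)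
    (hvb : x = y → x ∉ ({v, b} : Set (Fin n → Bool))) :
    ((AQ (n + 1)).deleteEdges {e | e ∈ (double p).edges}).Adj (cons a x) (cons a' y) := by
  refine deleteEdges_adj.2 ⟨hxy, fun hmem => ?_⟩
  rcases mem_edges_double hmem with ⟨haa, hxyp⟩ | ⟨rfl, hx⟩
  · exact hp haa hxyp
  · exact hvb rfl hx

end Double

section Connectivity

variable {κ : ℕ} {K : SimpleGraph (Fin n → Bool)} {H : SimpleGraph (Fin (n + 1) → Bool)}
  {S : Set (Fin (n + 1) → Bool)}

def slice (S : Set (Fin (n + 1) → Bool)) (a : Bool) : Set (Fin n → Bool) := cons a ⁻¹' S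

theorem ncard_slice_add_ncard_slice (S : Set (Fin (n + 1) → Bool)) :
    (slice S false).ncard + (slice S true).ncard = S.ncard := by
  have hS : cons false '' slice S false ∪ cons true '' slice S true = S := by
    ext z
    obtain ⟨a, x, rfl⟩ := exists_eq_cons z
    cases a <;> simp [slice]
  rw [← Set.ncard_image_of_injective (slice S false) (cons_right_injective false),
    ← Set.ncard_image_of_injective (slice S true) (cons_right_injective true),
    ← Set.ncard_union_eq (by simp [Set.disjoint_left]), hS]

theorem reachable_induce_of_ncard_slice_lt (hK : IsKConnected K κ)
    (hcopy : ∀ a x y, K.Adj x y → H.Adj (cons a x) (cons a y)) {a : Bool}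
    (hS : (slice S a).ncard < κ) {x y : Fin n → Bool} (hx : cons a x ∉ S)
    (hy : cons a y ∉ S) : (H.induce Sᶜ).Reachable ⟨cons a x, hx⟩ ⟨cons a y, hy⟩ :=
  ((hK.2 _ hS).preconnected ⟨x, hx⟩ ⟨y, hy⟩).map (G' := H.induce Sᶜ)
    { toFun z := ⟨cons a z.1, z.2⟩, map_rel' h := hcopy a _ _ h }

theorem exists_reachable_induce_cons_not [NeZero n] {X : Set (Fin n → Bool)}
    (hX : ∀ x ∈ X, κ < (K.neighborSet x).ncard)
    (hcopy : ∀ a x y, K.Adj x y → H.Adj (cons a x) (cons a y))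
    (hcompl : ∀ a x, H.Adj (cons a x) (cons (!a) xᶜ))
    (hcube : ∀ a, ∀ x ∉ X, H.Adj (cons a x) (cons (!a) x)) {a : Bool}
    (hS : (slice S a).ncard + (slice S (!a)).ncard ≤ κ + 1) (hS' : (slice S (!a)).ncard ≤ 1)
    {x : Fin n → Bool} (hx : cons a x ∉ S) :
    ∃ y, ∃ hy : cons (!a) y ∉ S,
      (H.induce Sᶜ).Reachable ⟨cons a x, hx⟩ ⟨cons (!a) y, hy⟩ := by
  by_cases hxc : cons (!a) xᶜ ∈ S
  swap
  · exact ⟨xᶜ, hxc, reachable_induce_of_adj _ _ (hcompl a x)⟩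
  have honly : ∀ y, cons (!a) y ∈ S → y = xᶜ := fun y hy =>
    Set.ncard_le_one_iff_subsingleton.1 hS' hy hxc
  have hpos : 0 < (slice S (!a)).ncard := (Set.ncard_pos (Set.toFinite _)).2 ⟨_, hxc⟩
  by_cases hxX : x ∈ X
  · obtain ⟨y, hxy, hyS⟩ := Set.exists_mem_notMem_of_ncard_lt_ncard (s := slice S a)
      (t := K.neighborSet x) (by have := hX x hxX; omega)
    have hyc : cons (!a) yᶜ ∉ S := fun h =>
      K.ne_of_adj hxy (compl_injective (honly _ h)).symm
    exact ⟨yᶜ, hyc, (reachable_induce_of_adj hx hyS (hcopy a x y hxy)).trans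
      (reachable_induce_of_adj _ _ (hcompl a y))⟩
  · exact ⟨x, fun h => compl_ne_self x (honly x h).symm,
      reachable_induce_of_adj _ _ (hcube a x hxX)⟩

theorem isKConnected_add_two_of_copies (hκ : 2 ≤ κ) (hcard : κ + 1 < 2 ^ n)
    {X : Set (Fin n → Bool)} (hK : IsKConnected K κ) (hX : ∀ x ∈ X, κ < (K.neighborSet x).ncard)
    (hcopy : ∀ a x y, K.Adj x y → H.Adj (cons a x) (cons a y))
    (hcompl : ∀ a x, H.Adj (cons a x) (cons (!a) xᶜ))
    (hcube : ∀ a, ∀ x ∉ X, H.Adj (cons a x) (cons (!a) x)) :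
    IsKConnected H (κ + 2) := by
  have : NeZero n := ⟨by rintro rfl; simp at hcard⟩
  refine ⟨by simp [pow_succ]; omega, fun S hS => ?_⟩
  have hsum := ncard_slice_add_ncard_slice S
  obtain ⟨a, hlight, hescape⟩ : ∃ a, (slice S a).ncard < κ ∧
      ∀ x (hx : cons (!a) x ∉ S), ∃ y, ∃ hy : cons a y ∉ S,
        (H.induce Sᶜ).Reachable ⟨cons (!a) x, hx⟩ ⟨cons a y, hy⟩ := by
    by_cases h0 : (slice S false).ncard < κ
    · by_cases h1 : (slice S true).ncard < κ
      · obtain ⟨x₀, -, hx₀⟩ := Set.exists_mem_notMem_of_ncard_lt_ncard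
          (s := slice S false ∪ compl '' slice S true) (t := Set.univ) (by
            have := Set.ncard_union_le (slice S false) (compl '' slice S true)
            rw [Set.ncard_image_of_injective _ compl_injective] at this
            simp; omega)
        simp only [Set.mem_union, Set.mem_compl_image, not_or] at hx₀
        refine ⟨false, h0, fun x hx => ⟨x₀, hx₀.1, ?_⟩⟩
        exact (reachable_induce_of_ncard_slice_lt hK hcopy h1 hx hx₀.2).trans
          (reachable_induce_of_adj _ _ (by simpa using hcompl true x₀ᶜ))
      · exact ⟨false, h0, fun x hx =>
          exists_reachable_induce_cons_not hX hcopy hcompl hcube (a := true)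
            (show _ + (slice S false).ncard ≤ _ by omega)
            (show (slice S false).ncard ≤ 1 by omega) hx⟩
    · exact ⟨true, by omega, fun x hx =>
        exists_reachable_induce_cons_not hX hcopy hcompl hcube (a := false)
          (show _ + (slice S true).ncard ≤ _ by omega)
          (show (slice S true).ncard ≤ 1 by omega) hx⟩
  obtain ⟨x₁, -, hx₁⟩ := Set.exists_mem_notMem_of_ncard_lt_ncard
    (s := slice S a) (t := Set.univ) (by simp; omega)
  refine (connected_iff_exists_forall_reachable _).2 ⟨⟨cons a x₁, hx₁⟩, fun ⟨z, hz⟩ => ?_⟩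
  obtain ⟨b, x, rfl⟩ := exists_eq_cons z
  obtain rfl | rfl : b = a ∨ b = !a := by cases a <;> cases b <;> simp
  · exact reachable_induce_of_ncard_slice_lt hK hcopy hlight hx₁ hz
  · obtain ⟨y, hy, hr⟩ := hescape x hz
    exact (hr.trans (reachable_induce_of_ncard_slice_lt hK hcopy hlight hy hx₁)).symm

end Connectivity

theorem isKConnected_deleteEdges_double (hn : 3 ≤ n) {v b : Fin n → Bool}
    (h : (AQ n).Adj v b) {p : (AQ n).Walk b v} (hc : (Walk.cons h p).IsHamiltonianCycle)
    (hK : IsKConnected ((AQ n).deleteEdges {e | e ∈ (Walk.cons h p).edges}) (2 * n - 3)) :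
    IsKConnected ((AQ (n + 1)).deleteEdges {e | e ∈ (double p).edges}) (2 * (n + 1) - 3) := by
  have : NeZero n := ⟨by omega⟩
  have hdeg : ∀ x ∈ ({v, b} : Set (Fin n → Bool)),
      2 * n - 3 < (((AQ n).deleteEdges {e | e ∈ p.edges}).neighborSet x).ncard := by
    intro x hx
    have := ncard_neighborSet_deleteEdges_lt_of_isCycle_cons h hc.isCycle hx
    rwa [ncard_neighborSet_deleteEdges_of_isCycle hc.isCycle (hc.mem_support x),
      ncard_neighborSet, show 2 * n - 1 - 2 = 2 * n - 3 by omega] at this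
  have hcard : 2 * n - 3 + 1 < 2 ^ n := by
    obtain ⟨m, rfl⟩ : ∃ m, n = m + 1 := ⟨n - 1, by omega⟩
    have := Nat.lt_two_pow_self (n := m)
    rw [pow_succ]
    omega
  rw [show 2 * (n + 1) - 3 = 2 * n - 3 + 2 by omega]
  exact isKConnected_add_two_of_copies (by omega) hcard
    (hK.mono (deleteEdges_anti fun _ he => List.mem_cons_of_mem _ he)) hdeg
    (fun a x y hxy => adj_deleteEdges_double
      (adj_cons_cons.2 (Or.inl ⟨rfl, (deleteEdges_adj.1 hxy).1⟩))
      (fun _ => (deleteEdges_adj.1 hxy).2) (fun hxy' => absurd hxy' hxy.ne))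
    (fun a x => adj_deleteEdges_double (adj_cons_cons.2 (Or.inr ⟨by simp, Or.inr rfl⟩))
      (by simp) (fun hx => absurd hx.symm (compl_ne_self x)))
    (fun a x hx => adj_deleteEdges_double (adj_cons_cons.2 (Or.inr ⟨by simp, Or.inl rfl⟩))
      (by simp) fun _ => hx)

def bits3 (k : ℕ) : Fin 3 → Bool := fun i => k.testBit (2 - i)

-- Binary counting `000 → 001 → ⋯ → 111 → 000`, bit `0` being the most significant: `k + 1`
-- arises from `k` by complementing a suffix, which is an edge of `AQ 3`.
def countingCycle3 : (AQ 3).Walk (bits3 0) (bits3 0) :=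
  .cons (v := bits3 1) (by decide) <| .cons (v := bits3 2) (by decide) <|
  .cons (v := bits3 3) (by decide) <| .cons (v := bits3 4) (by decide) <|
  .cons (v := bits3 5) (by decide) <| .cons (v := bits3 6) (by decide) <|
  .cons (v := bits3 7) (by decide) <| .cons (v := bits3 0) (by decide) .nil

theorem isHamiltonianCycle_countingCycle3 : countingCycle3.IsHamiltonianCycle := by
  rw [Walk.isHamiltonianCycle_iff_isCycle_and_support_count_tail_eq_one, Walk.isCycle_def,
    Walk.isTrail_def]
  refine ⟨⟨?_, nofun, ?_⟩, ?_⟩ <;> decide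

theorem expandWithin_deleteEdges_countingCycle3 :
    (∃ u, Finset.univ ⊆ (expandWithin ((AQ 3).deleteEdges {e | e ∈ countingCycle3.edges})
      Finset.univ)^[5] {u}) ∧
    ∀ a b : Fin 3 → Bool, ∃ u ∈ ({a, b}ᶜ : Finset _), {a, b}ᶜ ⊆
      (expandWithin ((AQ 3).deleteEdges {e | e ∈ countingCycle3.edges}) {a, b}ᶜ)^[5] {u} := by
  decide +kernel

theorem isKConnected_deleteEdges_countingCycle3 :
    IsKConnected ((AQ 3).deleteEdges {e | e ∈ countingCycle3.edges}) 3 := by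
  obtain ⟨⟨u, hu⟩, hpair⟩ := expandWithin_deleteEdges_countingCycle3
  refine ⟨by simp, fun S hS => ?_⟩
  obtain rfl | ⟨a, b, rfl⟩ : S = ∅ ∨ ∃ a b, S = {a, b} := by
    interval_cases h : S.ncard
    · exact Or.inl ((Set.ncard_eq_zero (Set.toFinite S)).1 h)
    · obtain ⟨a, rfl⟩ := Set.ncard_eq_one.1 h
      exact Or.inr ⟨a, a, by simp⟩
    · obtain ⟨a, b, -, rfl⟩ := Set.ncard_eq_two.1 h
      exact Or.inr ⟨a, b, rfl⟩
  · have := connected_induce_of_subset_iterate_expandWithin (Finset.mem_univ u) hu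
    rwa [Finset.coe_univ, ← Set.compl_empty] at this
  · obtain ⟨u, hu, hsub⟩ := hpair a b
    have := connected_induce_of_subset_iterate_expandWithin hu hsub
    rwa [Finset.coe_compl, Finset.coe_insert, Finset.coe_singleton] at this

theorem exists_isHamiltonianCycle_isKConnected (hn : 3 ≤ n) :
    ∃ (v : Fin n → Bool) (c : (AQ n).Walk v v), c.IsHamiltonianCycle ∧
      IsKConnected ((AQ n).deleteEdges {e | e ∈ c.edges}) (2 * n - 3) := by
  induction n, hn using Nat.le_induction with
  | base => exact ⟨_, _, isHamiltonianCycle_countingCycle3, isKConnected_deleteEdges_countingCycle3⟩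
  | succ n hn ih =>
    obtain ⟨v, c, hc, hK⟩ := ih
    cases c with
    | nil => exact absurd hc.isCycle Walk.not_isCycle_nil
    | cons h p =>
      refine ⟨_, double p, isHamiltonianCycle_double (fun z => ?_) h.ne.symm,
        isKConnected_deleteEdges_double hn h hc hK⟩
      exact (Walk.isHamiltonianCycle_iff_isCycle_and_support_count_tail_eq_one.1 hc).2 z

end AQ

theorem AQ_hamiltonian_complement (n : ℕ) (hn : 4 ≤ n) :
    ∃ (v : Fin n → Bool) (c : (AQ n).Walk v v), c.IsHamiltonianCycle ∧
      (AQ n).deleteEdges {e | e ∈ c.edges} ≤ AQ n ∧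
      IsKRegular ((AQ n).deleteEdges {e | e ∈ c.edges}) (2 * n - 3) ∧
        IsKConnected ((AQ n).deleteEdges {e | e ∈ c.edges}) (2 * n - 3) := by
  obtain ⟨v, c, hc, hK⟩ := AQ.exists_isHamiltonianCycle_isKConnected (n := n) (by omega)
  refine ⟨v, c, hc, deleteEdges_le _, fun x => ?_, hK⟩
  rw [ncard_neighborSet_deleteEdges_of_isCycle hc.isCycle (hc.mem_support x),
    AQ.ncard_neighborSet]
  omega
end
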